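/- Let G be a loopless multigraph with vertex set V, |V| = n, and edges e_1, …, e_m (unordered pairs of distinct vertices, parallel edges allowed), let Δ be the maximum degree of G, and let G' = (A, B, F) be the bipartite graph constructed as follows: A = V; for each vertex v, B contains a set S_v of exactly Δ vertices, consisting of one vertex v_{(i)} for each edge index i with v ∈ e_i together with Δ − deg(v) additional filler vertices, and B is the disjoint union of the sets S_v; F contains the edge {v, w} for every v ∈ A and every w ∈ S_v, and additionally, for every edge e_i = {u_i, v_i} of G, the edges {u_i, (v_i)_{(i)}} and {v_i, (u_i)_{(i)}}. Then for every natural number k, the following are equivalent: (i) G admits a linear arrangement of cost at most k; (ii) there exists F' ⊆ (A × B) ∖ F with |F'| + 2m ≤ k + Δ·n·(n−1)/2 such that (A, B, F ∪ F') is a chain graph. -/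

import Mathlib

/-!
Fix a ranking σ of `A = V`. Among the chain completions of `(A, B, F)` in which neighbourhoods
grow along σ, the smallest joins `v` to `w` exactly when some neighbour of `w` is ranked no later
than `v`; so a vertex `w ∈ B` whose neighbours have least rank `c` ends up with `n − c`
neighbours. A filler of `S_v` then has `n − σ v` neighbours, and the two copies of the edge
`e_i = {u, v}` have `2 (n − min (σ u) (σ v)) = (n − σ u) + (n − σ v) + |σ u − σ v|` together.
Since `|S_v| = Δ` for every `v`, this completion has `Δ (n(n−1)/2 + n) + cost σ` edges, against
`|F| = Δ n + 2m`, which gives both directions.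
-/

open Finset

def Inc {V : Type*} {m : ℕ} (E : Fin m → V × V) (v : V) (i : Fin m) : Prop :=
  (E i).1 = v ∨ (E i).2 = v

def mdeg {V : Type*} [DecidableEq V] {m : ℕ} (E : Fin m → V × V) (v : V) : ℕ :=
  (Finset.univ.filter fun i => (E i).1 = v ∨ (E i).2 = v).card

def maxDeg {V : Type*} [Fintype V] [DecidableEq V] {m : ℕ} (E : Fin m → V × V) : ℕ :=
  Finset.univ.sup (mdeg E)

def Bvert {V : Type*} [Fintype V] [DecidableEq V] {m : ℕ} (E : Fin m → V × V) : Type _ :=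
  Σ v : V, ({i : Fin m // Inc E v i} ⊕ Fin (maxDeg E - mdeg E v))

def Frel {V : Type*} [Fintype V] [DecidableEq V] {m : ℕ} (E : Fin m → V × V)
    (a : V) (w : Bvert E) : Prop :=
  w.1 = a ∨ ∃ (i : Fin m) (h : Inc E w.1 i),
    w.2 = Sum.inl ⟨i, h⟩ ∧
      (((E i).1 = a ∧ (E i).2 = w.1) ∨ ((E i).1 = w.1 ∧ (E i).2 = a))

section RankClosure

variable {V W α : Type*} [Preorder α] (r : V → α) (R : V → W → Prop)

/-- The least relation containing `R` whose rows `R v` grow along the ranking `r`, i.e. the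
smallest chain completion of `R` compatible with `r`. -/
def rankClosure (v : V) (w : W) : Prop :=
  ∃ u, r u ≤ r v ∧ R u w

variable {r R}

lemma rankClosure_of_rel {v : V} {w : W} (h : R v w) : rankClosure r R v w :=
  ⟨v, le_rfl, h⟩

lemma rankClosure.of_rank_le {u v : V} {w : W} (h : rankClosure r R u w)
    (huv : r u ≤ r v) : rankClosure r R v w :=
  let ⟨t, htu, ht⟩ := h
  ⟨t, htu.trans huv, ht⟩

lemma rankClosure.rel_of_mono {G : V → W → Prop} (hRG : ∀ v w, R v w → G v w)
    (hG : ∀ u v, r u ≤ r v → ∀ w, G u w → G v w) {v : V} {w : W}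
    (h : rankClosure r R v w) : G v w :=
  let ⟨u, huv, hu⟩ := h
  hG u v huv w (hRG u w hu)

end RankClosure

lemma card_filter_rank_ge {V : Type*} [Fintype V] {n : ℕ} (σ : V ≃ Fin n) (c : ℕ) :
    #{v | c ≤ (σ v : ℕ)} = n - c := by
  rw [← Nat.card_Ico, ← card_map ⟨_, Fin.val_injective.comp σ.injective⟩]
  congr 1
  ext j
  simp only [mem_map, mem_filter, mem_univ, true_and, Function.Embedding.coeFn_mk,
    Function.comp_apply, mem_Ico]
  constructor
  · rintro ⟨v, hv, rfl⟩
    exact ⟨hv, (σ v).isLt⟩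
  · rintro ⟨hcj, hjn⟩
    exact ⟨σ.symm ⟨j, hjn⟩, by simpa using hcj, by simp⟩

lemma sum_sub_rank {V : Type*} [Fintype V] {n : ℕ} (σ : V ≃ Fin n) :
    ∑ v, (n - (σ v : ℕ)) = n * (n - 1) / 2 + n := by
  rw [Equiv.sum_comp σ (fun p : Fin n => n - (p : ℕ)), Fin.sum_univ_eq_sum_range,
    ← sum_range_reflect]
  rw [sum_congr rfl fun j hj => show n - (n - 1 - j) = j + 1 by
    simp only [mem_range] at hj; omega]
  rw [sum_add_distrib, sum_range_id, sum_const, card_range, smul_eq_mul, mul_one]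

open Classical in
lemma card_filter_prod_eq_sum {V W : Type*} [Fintype V] [Fintype W] (P : V → W → Prop) :
    #{q : V × W | P q.1 q.2} = ∑ w, #{v | P v w} := by
  simp only [card_filter, Fintype.sum_prod_type_right]

section Reduction

variable {V : Type*} [Fintype V] [DecidableEq V] {m : ℕ} (E : Fin m → V × V)

instance (v : V) (i : Fin m) : Decidable (Inc E v i) :=
  inferInstanceAs (Decidable (_ ∨ _))

instance : Fintype (Bvert E) :=
  inferInstanceAs (Fintype (Σ v : V, ({i : Fin m // Inc E v i} ⊕ Fin (maxDeg E - mdeg E v))))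

def nbhd (w : Bvert E) : Finset V :=
  w.2.elim (fun i => {(E i.1).1, (E i.1).2}) fun _ => {w.1}

lemma frel_iff_mem_nbhd (a : V) (w : Bvert E) : Frel E a w ↔ a ∈ nbhd E w := by
  obtain ⟨x, i | j⟩ := w
  · obtain ⟨i, hi⟩ := i
    simp only [Frel, nbhd, Sum.elim_inl, mem_insert, mem_singleton, Sum.inl.injEq,
      Subtype.mk.injEq]
    constructor
    · rintro (rfl | ⟨i', -, rfl, h⟩)
      · rcases hi with h | h <;> simp [h]
      · tauto
    · rintro (h | h) <;> rcases id hi with h' | h'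
      · exact Or.inl (h' ▸ h.symm)
      · exact Or.inr ⟨i, hi, rfl, Or.inl ⟨h.symm, h'⟩⟩
      · exact Or.inr ⟨i, hi, rfl, Or.inr ⟨h', h.symm⟩⟩
      · exact Or.inl (h' ▸ h.symm)
  · simp [Frel, nbhd, eq_comm]

variable {E}

lemma mdeg_le_maxDeg (x : V) : mdeg E x ≤ maxDeg E :=
  le_sup (mem_univ x)

lemma sum_sum_inc (hloop : ∀ i, (E i).1 ≠ (E i).2) (F : V → Fin m → ℕ) :
    ∑ x, ∑ i : {i // Inc E x i}, F x i = ∑ i, (F (E i).1 i + F (E i).2 i) := by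
  have hends (i : Fin m) : ({x | Inc E x i} : Finset V) = {(E i).1, (E i).2} := by
    ext x
    simp [Inc, eq_comm]
  have hsub (x : V) : ∑ i : {i // Inc E x i}, F x i = ∑ i with Inc E x i, F x i :=
    (sum_subtype _ (by simp) _).symm
  simp only [hsub, sum_filter]
  rw [sum_comm]
  refine sum_congr rfl fun i _ => ?_
  rw [← sum_filter, hends, sum_pair (hloop i)]

lemma sum_mdeg_mul (hloop : ∀ i, (E i).1 ≠ (E i).2) (g : V → ℕ) :
    ∑ x, mdeg E x * g x = ∑ i, (g (E i).1 + g (E i).2) := by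
  rw [← sum_sum_inc hloop fun x _ => g x]
  simp only [sum_const, card_univ, Fintype.card_subtype, smul_eq_mul]
  rfl

/-- The edge `e_i = {u, v}` contributes `f e_i` twice, through `u_{(i)}` and `v_{(i)}`; trading
that for `f {u} + f {v} + c i`, each vertex `v` collects `f {v}` once per element of `S_v`. -/
lemma sum_nbhd (hloop : ∀ i, (E i).1 ≠ (E i).2) (f : Finset V → ℕ) (c : Fin m → ℕ)
    (hc : ∀ i, 2 * f {(E i).1, (E i).2} = f {(E i).1} + f {(E i).2} + c i) :
    ∑ w, f (nbhd E w) = maxDeg E * ∑ x, f {x} + ∑ i, c i := by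
  have hsplit : ∑ w, f (nbhd E w) = ∑ x, ∑ i : {i // Inc E x i}, f {(E i).1, (E i).2}
      + ∑ x, (maxDeg E - mdeg E x) * f {x} := by
    rw [← sum_add_distrib]
    refine (Fintype.sum_sigma _).trans (sum_congr rfl fun x _ => ?_)
    simp [Fintype.sum_sum_type, nbhd]
  have hdeg : ∑ x, mdeg E x * f {x} + ∑ x, (maxDeg E - mdeg E x) * f {x}
      = maxDeg E * ∑ x, f {x} := by
    rw [← sum_add_distrib, mul_sum]
    exact sum_congr rfl fun x _ => by rw [← add_mul, Nat.add_sub_cancel' (mdeg_le_maxDeg x)]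
  rw [hsplit, sum_sum_inc hloop fun _ i => f {(E i).1, (E i).2}, ← hdeg,
    sum_mdeg_mul hloop fun x => f {x}]
  simp only [← two_mul, hc, sum_add_distrib]
  ring

open Classical in
lemma card_filter_frel (hloop : ∀ i, (E i).1 ≠ (E i).2) :
    #{q : V × Bvert E | Frel E q.1 q.2} = maxDeg E * Fintype.card V + 2 * m := by
  have hc (i : Fin m) : 2 * #{(E i).1, (E i).2} = #{(E i).1} + #{(E i).2} + 2 := by
    rw [card_pair (hloop i), card_singleton, card_singleton]
  rw [card_filter_prod_eq_sum]
  simp only [frel_iff_mem_nbhd, filter_mem_eq_inter, univ_inter]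
  rw [sum_nbhd hloop card _ hc]
  simp [mul_comm]

open Classical in
lemma card_filter_rankClosure (hloop : ∀ i, (E i).1 ≠ (E i).2) {n : ℕ} (σ : V ≃ Fin n) :
    #{q : V × Bvert E | rankClosure (fun v => (σ v : ℕ)) (Frel E) q.1 q.2}
      = maxDeg E * (n * (n - 1) / 2 + n)
        + ∑ i, (((σ (E i).1 : ℕ) : ℤ) - ((σ (E i).2 : ℕ) : ℤ)).natAbs := by
  set f : Finset V → ℕ := fun s => #{v | ∃ u ∈ s, (σ u : ℕ) ≤ σ v}
  have hf_singleton (a : V) : f {a} = n - σ a := by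
    simp only [f, mem_singleton, exists_eq_left, card_filter_rank_ge]
  have hc (i : Fin m) : 2 * f {(E i).1, (E i).2} = f {(E i).1} + f {(E i).2}
      + (((σ (E i).1 : ℕ) : ℤ) - ((σ (E i).2 : ℕ) : ℤ)).natAbs := by
    have hpair : f {(E i).1, (E i).2} = n - min (σ (E i).1 : ℕ) (σ (E i).2) := by
      simp only [f, mem_insert, mem_singleton, exists_eq_or_imp, exists_eq_left, ← min_le_iff,
        card_filter_rank_ge]
    have := (σ (E i).1).isLt
    have := (σ (E i).2).isLt
    rw [hpair, hf_singleton, hf_singleton]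
    omega
  have hrow (w : Bvert E) :
      #{v | rankClosure (fun v => (σ v : ℕ)) (Frel E) v w} = f (nbhd E w) := by
    simp only [f, rankClosure, frel_iff_mem_nbhd, and_comm]
  rw [card_filter_prod_eq_sum]
  simp only [hrow]
  rw [sum_nbhd hloop f _ hc]
  simp only [hf_singleton, sum_sub_rank]

lemma exists_chain_completion_of_ranking (hloop : ∀ i, (E i).1 ≠ (E i).2) {n : ℕ}
    (π : V ≃ Fin n) :
    ∃ F' : Finset (V × Bvert E), (∀ q ∈ F', ¬ Frel E q.1 q.2) ∧
      F'.card + 2 * m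
        = ∑ i, (((π (E i).1 : ℕ) : ℤ) - ((π (E i).2 : ℕ) : ℤ)).natAbs
          + maxDeg E * (n * (n - 1) / 2) ∧
      ∀ u v : V, (π u : ℕ) ≤ (π v : ℕ) →
        ∀ w : Bvert E, (Frel E u w ∨ (u, w) ∈ F') → (Frel E v w ∨ (v, w) ∈ F') := by
  classical
  set F : Finset (V × Bvert E) := {q | Frel E q.1 q.2}
  set C : Finset (V × Bvert E) := {q | rankClosure (fun v => (π v : ℕ)) (Frel E) q.1 q.2}
  have hFC : F ⊆ C := fun q hq => by simpa [F, C] using rankClosure_of_rel (mem_filter.1 hq).2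
  refine ⟨C \ F, fun q hq hFq => (mem_sdiff.1 hq).2 (by simpa [F] using hFq), ?_, ?_⟩
  · have hF : #F = maxDeg E * n + 2 * m := by
      rw [card_filter_frel hloop, Fintype.card_congr π, Fintype.card_fin]
    have := card_le_card hFC
    rw [card_sdiff_of_subset hFC, card_filter_rankClosure hloop π, hF] at *
    rw [mul_add] at *
    omega
  · intro u v huv w huw
    have hu : rankClosure (fun v => (π v : ℕ)) (Frel E) u w := by
      rcases huw with h | h
      · exact rankClosure_of_rel h
      · simpa [C] using (mem_sdiff.1 h).1
    by_cases hv : Frel E v w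
    · exact Or.inl hv
    · exact Or.inr (mem_sdiff.2 ⟨by simpa [C] using hu.of_rank_le huv, by simpa [F] using hv⟩)

lemma cost_le_of_chain_completion (hloop : ∀ i, (E i).1 ≠ (E i).2) {n : ℕ}
    (σ : V ≃ Fin n) (F' : Finset (V × Bvert E))
    (hchain : ∀ u v : V, (σ u : ℕ) ≤ (σ v : ℕ) →
      ∀ w : Bvert E, (Frel E u w ∨ (u, w) ∈ F') → (Frel E v w ∨ (v, w) ∈ F')) :
    ∑ i, (((σ (E i).1 : ℕ) : ℤ) - ((σ (E i).2 : ℕ) : ℤ)).natAbs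
        + maxDeg E * (n * (n - 1) / 2) ≤ F'.card + 2 * m := by
  classical
  set F : Finset (V × Bvert E) := {q | Frel E q.1 q.2}
  set C : Finset (V × Bvert E) := {q | rankClosure (fun v => (σ v : ℕ)) (Frel E) q.1 q.2}
  have hCF : C ⊆ F ∪ F' := fun q hq => by
    simpa [F] using (mem_filter.1 hq).2.rel_of_mono (fun _ _ => Or.inl) hchain
  have := (card_le_card hCF).trans (card_union_le F F')
  rw [card_filter_rankClosure hloop σ, card_filter_frel hloop, Fintype.card_congr σ,
    Fintype.card_fin, mul_add] at this
  omega

end Reduction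

theorem ola_to_chain_completion {V : Type*} [Fintype V] [DecidableEq V] {m : ℕ}
    (E : Fin m → V × V) (hloop : ∀ i, (E i).1 ≠ (E i).2)
    (n : ℕ) (k : ℕ) :
    (∃ π : V ≃ Fin n,
      (∑ i : Fin m, (((π (E i).1 : ℕ) : ℤ) - ((π (E i).2 : ℕ) : ℤ)).natAbs) ≤ k) ↔
    (∃ F' : Finset (V × Bvert E),
      (∀ q ∈ F', ¬ Frel E q.1 q.2) ∧
      F'.card + 2 * m ≤ k + maxDeg E * (n * (n - 1) / 2) ∧
      ∃ σ : V ≃ Fin n, ∀ u v : V, (σ u : ℕ) ≤ (σ v : ℕ) →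
        ∀ w : Bvert E, (Frel E u w ∨ (u, w) ∈ F') → (Frel E v w ∨ (v, w) ∈ F')) := by
  constructor
  · rintro ⟨π, hπ⟩
    obtain ⟨F', hF', hcard, hchain⟩ := exists_chain_completion_of_ranking hloop π
    exact ⟨F', hF', by omega, π, hchain⟩
  · rintro ⟨F', -, hcard, σ, hchain⟩
    have := cost_le_of_chain_completion hloop σ F' hchain
    exact ⟨σ, by omega⟩
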